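/- arXiv:math/0411640 — 3 statements merged into one kernel-verified Lean document; each statement's English description precedes it below -/
import Mathlib

section
/- Let U ⊆ ℝ³ be open, let α be a smooth contact form on U, and let h : U → ℝ be a smooth function with h(p) > 0 for every p ∈ U. Then there exists a unique smooth vector field R : U → ℝ³ such that for every p ∈ U one has α_p(R(p)) = h(p) and dα_p(R(p), v) = −(Dh)(p)(v) for every v ∈ ker α_p. -/
set_option maxHeartbeats 1000000

noncomputable section

abbrev V3 : Type := ℝ × ℝ × ℝ

/-- The exterior derivative of a smooth 1-form `α` on (an open subset of) `ℝ³`: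
`dα_p(u,v) = (Dα)(p)(u)(v) − (Dα)(p)(v)(u)`. -/
def dform (α : V3 → (V3 →L[ℝ] ℝ)) (p : V3) (u v : V3) : ℝ :=
  fderiv ℝ α p u v - fderiv ℝ α p v u

/-- `α` is a contact form at `p`: `α_p ≠ 0` and `dα_p` is nondegenerate on `ker α_p`. -/
def ContactAt (α : V3 → (V3 →L[ℝ] ℝ)) (p : V3) : Prop :=
  α p ≠ 0 ∧ ∀ u : V3, α p u = 0 → u ≠ 0 → ∃ v : V3, α p v = 0 ∧ dform α p u v ≠ 0

/-- The auxiliary pointwise linear map `B_p w = dα_p(w,·) + α_p(w)·α_p`. -/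
def Bmap (α : V3 → (V3 →L[ℝ] ℝ)) (p : V3) : V3 →L[ℝ] (V3 →L[ℝ] ℝ) :=
  fderiv ℝ α p - (fderiv ℝ α p).flip + (α p).smulRight (α p)

theorem Bmap_apply (α : V3 → (V3 →L[ℝ] ℝ)) (p u v : V3) :
    Bmap α p u v = dform α p u v + α p u * α p v := by
  simp [Bmap, dform, ContinuousLinearMap.smulRight_apply]

theorem Bmap_ker (α : V3 → (V3 →L[ℝ] ℝ)) (p : V3) (hc : ContactAt α p)
    (w : V3) (hw : Bmap α p w = 0) : w = 0 := by
  have hwv : ∀ v, Bmap α p w v = 0 := fun v => by rw [hw]; rfl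
  have h1 : α p w = 0 := by
    have h2 := hwv w
    rw [Bmap_apply] at h2
    have hd : dform α p w w = 0 := by simp [dform]
    have : α p w * α p w = 0 := by linarith
    exact mul_self_eq_zero.mp this
  have h2 : ∀ v, dform α p w v = 0 := by
    intro v
    have := hwv v
    rw [Bmap_apply, h1] at this
    linarith
  by_contra hw0
  obtain ⟨v, _, hvd⟩ := hc.2 w h1 hw0
  exact hvd (h2 v)

theorem Bmap_bijective (α : V3 → (V3 →L[ℝ] ℝ)) (p : V3) (hc : ContactAt α p) :
    Function.Bijective (Bmap α p) := by
  have hdim : Module.finrank ℝ V3 = Module.finrank ℝ (V3 →L[ℝ] ℝ) := by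
    rw [← (LinearMap.toContinuousLinearMap :
        (V3 →ₗ[ℝ] ℝ) ≃ₗ[ℝ] (V3 →L[ℝ] ℝ)).finrank_eq, Module.finrank_linearMap_self]
  have hinj : Function.Injective ((Bmap α p) : V3 →ₗ[ℝ] (V3 →L[ℝ] ℝ)) := by
    rw [injective_iff_map_eq_zero]
    exact fun w hw => Bmap_ker α p hc w hw
  exact ⟨hinj, (LinearMap.injective_iff_surjective_of_finrank_eq_finrank hdim).mp hinj⟩

/-- `Bmap α p` as a continuous linear equivalence, when `α` is contact at `p`. -/
def Bequiv (α : V3 → (V3 →L[ℝ] ℝ)) (p : V3) (hc : ContactAt α p) :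
    V3 ≃L[ℝ] (V3 →L[ℝ] ℝ) :=
  (LinearEquiv.ofBijective ((Bmap α p) : V3 →ₗ[ℝ] (V3 →L[ℝ] ℝ))
    (Bmap_bijective α p hc)).toContinuousLinearEquiv

theorem Bequiv_coe (α : V3 → (V3 →L[ℝ] ℝ)) (p : V3) (hc : ContactAt α p) :
    (Bequiv α p hc : V3 →L[ℝ] (V3 →L[ℝ] ℝ)) = Bmap α p :=
  ContinuousLinearMap.ext fun _ => rfl

theorem Bmap_inverse (α : V3 → (V3 →L[ℝ] ℝ)) (p : V3) (hc : ContactAt α p)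
    (φ : V3 →L[ℝ] ℝ) : Bmap α p ((Bmap α p).inverse φ) = φ := by
  rw [← Bequiv_coe α p hc, ContinuousLinearMap.inverse_equiv]
  exact (Bequiv α p hc).apply_symm_apply φ

theorem Bmap_contDiffOn (U : Set V3) (hUopen : IsOpen U)
    (α : V3 → (V3 →L[ℝ] ℝ)) (hα : ContDiffOn ℝ (⊤ : ℕ∞) α U) :
    ContDiffOn ℝ (⊤ : ℕ∞) (fun p => Bmap α p) U := by
  have hα' : ContDiffOn ℝ (⊤ : ℕ∞) (fun p => fderiv ℝ α p) U :=
    hα.fderiv_of_isOpen hUopen (by simp)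
  refine ContDiffOn.add (ContDiffOn.sub hα' ?_) ?_
  · have hflip : ContDiff ℝ (⊤ : ℕ∞) (fun f : V3 →L[ℝ] (V3 →L[ℝ] ℝ) =>
        (ContinuousLinearMap.flipₗᵢ ℝ V3 V3 ℝ) f) := by
      fun_prop
    exact hflip.comp_contDiffOn hα'
  · have hb : IsBoundedBilinearMap ℝ
        (fun q : (V3 →L[ℝ] ℝ) × (V3 →L[ℝ] ℝ) => q.1.smulRight q.2) :=
      isBoundedBilinearMap_smulRight
    have hb' : ContDiff ℝ (⊤ : ℕ∞)
        (fun q : (V3 →L[ℝ] ℝ) × (V3 →L[ℝ] ℝ) => q.1.smulRight q.2) := hb.contDiff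
    exact hb'.comp_contDiffOn (hα.prodMk hα)

theorem Bmap_inv_contDiffOn (U : Set V3) (hUopen : IsOpen U)
    (α : V3 → (V3 →L[ℝ] ℝ)) (hα : ContDiffOn ℝ (⊤ : ℕ∞) α U)
    (hcontact : ∀ p ∈ U, ContactAt α p) :
    ContDiffOn ℝ (⊤ : ℕ∞) (fun p => (Bmap α p).inverse) U := by
  intro p hp
  have h1 : ContDiffAt ℝ (⊤ : ℕ∞) ContinuousLinearMap.inverse (Bmap α p) := by
    rw [← Bequiv_coe α p (hcontact p hp)]
    exact contDiffAt_map_inverse (Bequiv α p (hcontact p hp))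
  exact (h1.comp p
    ((Bmap_contDiffOn U hUopen α hα).contDiffAt (hUopen.mem_nhds hp))).contDiffWithinAt

theorem alpha_w0 (α : V3 → (V3 →L[ℝ] ℝ)) (p : V3) (hc : ContactAt α p) :
    α p ((Bmap α p).inverse (α p)) = 1 := by
  set w : V3 := (Bmap α p).inverse (α p) with hw
  have hB : Bmap α p w = α p := Bmap_inverse α p hc (α p)
  have hBv : ∀ v, dform α p w v + α p w * α p v = α p v := by
    intro v
    rw [← Bmap_apply, hB]
  have hd : dform α p w w = 0 := by simp [dform]
  have hsq : α p w * α p w = α p w := by have := hBv w; linarith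
  have hfac : α p w * (α p w - 1) = 0 := by ring_nf; linarith
  rcases mul_eq_zero.mp hfac with h0 | h1
  · exfalso
    have hdv : ∀ v, dform α p w v = α p v := by
      intro v; have := hBv v; rw [h0] at this; linarith
    by_cases hw0 : w = 0
    · apply hc.1
      refine ContinuousLinearMap.ext fun v => ?_
      have := hdv v
      rw [hw0] at this
      simpa [dform] using this.symm
    · obtain ⟨v, hv0, hvd⟩ := hc.2 w h0 hw0
      exact hvd (by rw [hdv v, hv0])
  · linarith [sub_eq_zero.mp h1]

/-- On an open set `U ⊆ ℝ³` with a smooth contact form `α` and a smooth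
positive function `h`, there is a unique smooth vector field `R` on `U` with
`α_p(R p) = h p` and `dα_p(R p, v) = −(Dh)(p)(v)` for all `v ∈ ker α_p`. -/
theorem statement0 (U : Set V3) (hUopen : IsOpen U)
    (α : V3 → (V3 →L[ℝ] ℝ)) (hα : ContDiffOn ℝ (⊤ : ℕ∞) α U)
    (hcontact : ∀ p ∈ U, ContactAt α p)
    (h : V3 → ℝ) (hh : ContDiffOn ℝ (⊤ : ℕ∞) h U) (hhpos : ∀ p ∈ U, 0 < h p) :
    ∃ R : V3 → V3,
      (ContDiffOn ℝ (⊤ : ℕ∞) R U ∧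
        ∀ p ∈ U, α p (R p) = h p ∧
          ∀ v : V3, α p v = 0 → dform α p (R p) v = - fderiv ℝ h p v) ∧
      ∀ R' : V3 → V3,
        (ContDiffOn ℝ (⊤ : ℕ∞) R' U ∧
          ∀ p ∈ U, α p (R' p) = h p ∧
            ∀ v : V3, α p v = 0 → dform α p (R' p) v = - fderiv ℝ h p v) →
        ∀ p ∈ U, R' p = R p := by
  classical
  set R0 : V3 → V3 := fun p => (Bmap α p).inverse (-(fderiv ℝ h p)) with hR0def
  set w0 : V3 → V3 := fun p => (Bmap α p).inverse (α p) with hw0def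
  set R : V3 → V3 := fun p => R0 p + (h p - α p (R0 p)) • w0 p with hRdef
  have hInv := Bmap_inv_contDiffOn U hUopen α hα hcontact
  have hh' : ContDiffOn ℝ (⊤ : ℕ∞) (fun p => fderiv ℝ h p) U :=
    hh.fderiv_of_isOpen hUopen (by simp)
  have hR0s : ContDiffOn ℝ (⊤ : ℕ∞) R0 U := hInv.clm_apply hh'.neg
  have hw0s : ContDiffOn ℝ (⊤ : ℕ∞) w0 U := hInv.clm_apply hα
  have hRs : ContDiffOn ℝ (⊤ : ℕ∞) R U :=
    hR0s.add ((hh.sub (hα.clm_apply hR0s)).smul hw0s)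
  refine ⟨R, ⟨hRs, ?_⟩, ?_⟩
  · intro p hp
    have hcp := hcontact p hp
    have hBR0 : Bmap α p (R0 p) = -(fderiv ℝ h p) := Bmap_inverse α p hcp _
    have hBw0 : Bmap α p (w0 p) = α p := Bmap_inverse α p hcp _
    have hαw0 : α p (w0 p) = 1 := alpha_w0 α p hcp
    have hαR : α p (R p) = h p := by
      have : α p (R p) = α p (R0 p) + (h p - α p (R0 p)) * α p (w0 p) := by
        simp [hRdef]
      rw [this, hαw0]; ring
    refine ⟨hαR, fun v hv => ?_⟩
    have hBR : Bmap α p (R p) = -(fderiv ℝ h p) + (h p - α p (R0 p)) • α p := by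
      have : (Bmap α p) (R0 p + (h p - α p (R0 p)) • w0 p)
          = Bmap α p (R0 p) + (h p - α p (R0 p)) • Bmap α p (w0 p) := by
        simp
      rw [hRdef, this, hBR0, hBw0]
    have e1 : dform α p (R p) v + α p (R p) * α p v = Bmap α p (R p) v :=
      (Bmap_apply α p (R p) v).symm
    have e2 : Bmap α p (R p) v = - fderiv ℝ h p v := by
      rw [hBR]
      simp [hv]
    rw [hv, e2] at e1
    linarith
  · rintro R' ⟨-, hR'⟩ p hp
    have hcp := hcontact p hp
    obtain ⟨hα1, hd1⟩ := hR' p hp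
    have hαR : α p (R p) = h p := by
      -- reprove as above via Bmap facts
      have hBw0 : Bmap α p (w0 p) = α p := Bmap_inverse α p hcp _
      have hαw0 : α p (w0 p) = 1 := alpha_w0 α p hcp
      have : α p (R p) = α p (R0 p) + (h p - α p (R0 p)) * α p (w0 p) := by
        simp [hRdef]
      rw [this, hαw0]; ring
    have hdR : ∀ v : V3, α p v = 0 → dform α p (R p) v = - fderiv ℝ h p v := by
      intro v hv
      have hBR0 : Bmap α p (R0 p) = -(fderiv ℝ h p) := Bmap_inverse α p hcp _
      have hBw0 : Bmap α p (w0 p) = α p := Bmap_inverse α p hcp _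
      have hBR : Bmap α p (R p) = -(fderiv ℝ h p) + (h p - α p (R0 p)) • α p := by
        have : (Bmap α p) (R0 p + (h p - α p (R0 p)) • w0 p)
            = Bmap α p (R0 p) + (h p - α p (R0 p)) • Bmap α p (w0 p) := by
          simp
        rw [hRdef, this, hBR0, hBw0]
      have e1 : dform α p (R p) v + α p (R p) * α p v = Bmap α p (R p) v :=
        (Bmap_apply α p (R p) v).symm
      have e2 : Bmap α p (R p) v = - fderiv ℝ h p v := by
        rw [hBR]; simp [hv]
      rw [hv, e2] at e1
      linarith
    have hker : α p (R' p - R p) = 0 := by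
      rw [map_sub, hα1, hαR, sub_self]
    have hdsub : ∀ v : V3, α p v = 0 → dform α p (R' p - R p) v = 0 := by
      intro v hv
      have hlin : dform α p (R' p - R p) v = dform α p (R' p) v - dform α p (R p) v := by
        simp [dform]
        ring
      rw [hlin, hd1 v hv, hdR v hv, sub_self]
    by_contra hne
    have hwne : R' p - R p ≠ 0 := sub_ne_zero.mpr hne
    obtain ⟨v, hv0, hvd⟩ := hcp.2 _ hker hwne
    exact hvd (hdsub v hv0)
end
end

section
/- Let c < d be real numbers and let H : ℝ² × [c,d] → ℝ be a C¹ function (smooth in the sense of extending to an open neighborhood) which is ℤ²-periodic in the first two variables, i.e., H(x+1, y, t) = H(x, y+1, t) = H(x, y, t) for all (x,y,t). Suppose that sin(t)·∂H/∂x(x,y,t) + cos(t)·∂H/∂y(x,y,t) = 0 for all (x,y,t) ∈ ℝ² × [c,d]. Then ∂H/∂x and ∂H/∂y vanish identically on ℝ² × [c,d]; equivalently, H(x,y,t) = H(0,0,t) depends only on t. -/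
/-!
Along each characteristic line `s ↦ (x + s sin t, y + s cos t)` the derivative of `H(·,·,t)` is
the left-hand side of the equation, so `H(·,·,t)` is constant on these lines. Restricted to the
horizontal line `y = 0`, it then has period `1` (from `x`-periodicity) and period `tan t` (follow
the characteristic line up to `y = 1` and use `y`-periodicity). When `tan t` is irrational these
periods generate a dense subgroup of `ℝ`, so `H(·,·,t)` is constant. Only countably many `t` have
rational `tan t`, and continuity in `t` extends the conclusion to all of `[c,d]`.
-/

noncomputable section

open Function Set Real

theorem Function.Periodic.eq_const_of_irrational_div {α : Type*} [TopologicalSpace α] [T2Space α]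
    {g : ℝ → α} {a b : ℝ} (hg : Continuous g) (ha : Periodic g a) (hb : Periodic g b)
    (hab : Irrational (a / b)) (x : ℝ) : g x = g 0 := by
  have hper : ∀ p ∈ AddSubgroup.closure {a, b}, Periodic g p := fun p hp =>
    AddSubgroup.closure_induction (fun q hq => by rcases hq with rfl | rfl; exacts [ha, hb])
      (fun _ => by rw [add_zero]) (fun _ _ _ _ => Periodic.add_period) (fun _ _ => Periodic.neg) hp
  have hdense := dense_addSubgroupClosure_pair_iff.2 hab
  refine congrFun (Continuous.ext_on hdense hg continuous_const fun p hp => ?_) x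
  simpa using hper p hp 0

theorem eq_of_periodic_of_forall_line_eq {f : ℝ → ℝ → ℝ} (hf : Continuous fun x => f x 0)
    {a b : ℝ} (hab : Irrational (a / b)) (hperx : ∀ x y, f (x + 1) y = f x y)
    (hpery : ∀ x y, f x (y + 1) = f x y) (hline : ∀ x y s, f (x + s * a) (y + s * b) = f x y)
    (x y : ℝ) : f x y = f 0 0 := by
  have hb : b ≠ 0 := fun hb => hab.ne_zero (by simp [hb])
  have hper_one : Periodic (fun u => f u 0) 1 := fun u => hperx u 0
  have hper_slope : Periodic (fun u => f u 0) (a / b) := fun u => by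
    calc f (u + a / b) 0 = f (u + b⁻¹ * a) (0 + b⁻¹ * b) := by
          rw [inv_mul_cancel₀ hb, zero_add, ← zero_add 1, hpery, div_eq_inv_mul]
      _ = f u 0 := hline u 0 _
  calc f x y = f (x - y * (a / b) + (y / b) * a) (0 + (y / b) * b) := by
        congr 1 <;> field_simp <;> ring
    _ = f 0 0 := by
        rw [hline]
        exact hper_slope.eq_const_of_irrational_div hf hper_one (by simpa using hab) _

theorem Real.countable_setOf_tan_eq (q : ℝ) : {t | tan t = q}.Countable := by
  refine ((countable_range fun k : ℤ => arctan q + k * π).union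
    (countable_range fun k : ℤ => (2 * k + 1) * π / 2)).mono fun t ht => ?_
  by_cases hcos : cos t = 0
  · obtain ⟨k, hk⟩ := cos_eq_zero_iff.1 hcos
    exact Or.inr ⟨k, hk.symm⟩
  · have hsin : sin t = q * cos t := by
      rw [← show tan t = q from ht, tan_eq_sin_div_cos, div_mul_cancel₀ _ hcos]
    have hsin_sub : sin (t - arctan q) = 0 := by
      rw [sin_sub, sin_arctan, cos_arctan, hsin]
      ring
    obtain ⟨k, hk⟩ := sin_eq_zero_iff.1 hsin_sub
    exact Or.inl ⟨k, by linarith⟩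

theorem Real.countable_setOf_not_irrational_tan : {t | ¬Irrational (tan t)}.Countable :=
  (countable_iUnion fun q : ℚ => countable_setOf_tan_eq q).mono fun t ht => by
    simpa [Irrational, eq_comm] using ht

theorem Set.Countable.Icc_subset_closure_Icc_diff {S : Set ℝ} (hS : S.Countable) {c d : ℝ}
    (hcd : c < d) : Icc c d ⊆ closure (Icc c d \ S) :=
  calc Icc c d = closure (Ioo c d) := (closure_Ioo hcd.ne).symm
    _ ⊆ closure (Ioo c d \ S) :=
      closure_minimal ((hS.dense_compl ℝ).open_subset_closure_inter isOpen_Ioo) isClosed_closure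
    _ ⊆ closure (Icc c d \ S) := closure_mono (sdiff_subset_sdiff_left Ioo_subset_Icc_self)

theorem eq_of_forall_fderiv_apply_eq_zero_on_line {E F : Type*} [NormedAddCommGroup E]
    [NormedSpace ℝ E] [NormedAddCommGroup F] [NormedSpace ℝ F] {f : E → F} {p v : E}
    (hf : ∀ s : ℝ, DifferentiableAt ℝ f (p + s • v))
    (hv : ∀ s : ℝ, fderiv ℝ f (p + s • v) v = 0) (s : ℝ) : f (p + s • v) = f p := by
  have hderiv : ∀ s : ℝ, HasDerivAt (fun s : ℝ => f (p + s • v)) 0 s := fun s => by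
    simpa [hv s, comp_def] using
      (hf s).hasFDerivAt.comp_hasDerivAt s (((hasDerivAt_id s).smul_const v).const_add p)
  simpa using is_const_of_deriv_eq_zero (fun s => (hderiv s).differentiableAt)
    (fun s => (hderiv s).deriv) s 0

theorem fderiv_apply_eq_zero_of_forall_eq_on_line {E F : Type*} [NormedAddCommGroup E]
    [NormedSpace ℝ E] [NormedAddCommGroup F] [NormedSpace ℝ F] {f : E → F} {p v : E}
    (hf : DifferentiableAt ℝ f p) (hv : ∀ s : ℝ, f (p + s • v) = f p) : fderiv ℝ f p v = 0 := by
  rw [← hf.lineDeriv_eq_fderiv, lineDeriv, funext hv, deriv_const]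

/-- If `H : ℝ² × [c,d] → ℝ` is `C¹` (on an open neighborhood of the slab),
`ℤ²`-periodic in the first two variables, and satisfies
`sin t · ∂H/∂x + cos t · ∂H/∂y = 0` on `ℝ² × [c,d]`, then `∂H/∂x` and `∂H/∂y` vanish
identically there; equivalently `H(x,y,t) = H(0,0,t)` depends only on `t`. -/
theorem statement3 (c d : ℝ) (hcd : c < d)
    (H : V3 → ℝ) (U : Set V3) (hUopen : IsOpen U)
    (hUsub : {p : V3 | p.2.2 ∈ Set.Icc c d} ⊆ U)
    (hH : ContDiffOn ℝ 1 H U)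
    (hperx : ∀ x y t : ℝ, H (x + 1, y, t) = H (x, y, t))
    (hpery : ∀ x y t : ℝ, H (x, y + 1, t) = H (x, y, t))
    (heq : ∀ p : V3, p.2.2 ∈ Set.Icc c d →
      Real.sin p.2.2 * fderiv ℝ H p (1, 0, 0) + Real.cos p.2.2 * fderiv ℝ H p (0, 1, 0) = 0) :
    (∀ p : V3, p.2.2 ∈ Set.Icc c d →
      fderiv ℝ H p (1, 0, 0) = 0 ∧ fderiv ℝ H p (0, 1, 0) = 0) ∧
    (∀ p : V3, p.2.2 ∈ Set.Icc c d → H p = H (0, 0, p.2.2)) := by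
  have hdiff : ∀ p : V3, p.2.2 ∈ Icc c d → DifferentiableAt ℝ H p := fun p hp =>
    (hH.contDiffAt (hUopen.mem_nhds (hUsub hp))).differentiableAt one_ne_zero
  have hdir : ∀ p : V3, p.2.2 ∈ Icc c d → fderiv ℝ H p (sin p.2.2, cos p.2.2, 0) = 0 := by
    intro p hp
    have hv : ((sin p.2.2, cos p.2.2, 0) : V3) = sin p.2.2 • (1, 0, 0) + cos p.2.2 • (0, 1, 0) := by
      simp
    rw [hv, map_add, map_smul, map_smul, smul_eq_mul, smul_eq_mul]
    exact heq p hp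
  have hchar : ∀ t ∈ Icc c d, ∀ x y s, H (x + s * sin t, y + s * cos t, t) = H (x, y, t) := by
    intro t ht x y s
    simpa using eq_of_forall_fderiv_apply_eq_zero_on_line (p := ((x, y, t) : V3))
      (v := (sin t, cos t, 0)) (fun _ => hdiff _ (by simpa using ht))
      (fun _ => by simpa using hdir _ (by simpa using ht)) s
  have hslice : ∀ t ∈ Icc c d, Irrational (tan t) → ∀ x y, H (x, y, t) = H (0, 0, t) :=
    fun t ht htan => eq_of_periodic_of_forall_line_eq (f := fun x y => H (x, y, t))
      (hH.continuousOn.comp_continuous (by fun_prop) fun _ => hUsub ht)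
      (by rwa [← tan_eq_sin_div_cos]) (fun x y => hperx x y t) (fun x y => hpery x y t) (hchar t ht)
  have hslab : ∀ p : V3, p.2.2 ∈ Icc c d → H p = H (0, 0, p.2.2) := by
    rintro ⟨x, y, t⟩ ht
    have hcont : ∀ x y, ContinuousOn (fun s => H (x, y, s)) (Icc c d) := fun x y =>
      hH.continuousOn.comp (by fun_prop) fun _ hs => hUsub hs
    exact EqOn.of_subset_closure (fun s hs => hslice s hs.1 (not_not.1 hs.2) x y) (hcont x y)
      (hcont 0 0) sdiff_subset
      (countable_setOf_not_irrational_tan.Icc_subset_closure_Icc_diff hcd) ht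
  refine ⟨fun p hp => ⟨?_, ?_⟩, hslab⟩ <;>
    refine fderiv_apply_eq_zero_of_forall_eq_on_line (hdiff p hp) fun s => ?_ <;>
    rw [hslab _ (by simpa using hp), hslab p hp] <;> simp
end
end

section
/- Let n, w₀, w₁ ∈ ℝ² with n ≠ 0, ⟨w₀, n⟩ > 0, ⟨w₁, n⟩ > 0, and det(w₀, w₁) > 0 (writing w₀ = (u₀,v₀), w₁ = (u₁,v₁), this means u₀v₁ − v₀u₁ > 0). Then there exists a smooth map w = (f,g) : [0,1] → ℝ² ∖ {(0,0)} with w(0) = w₀, w(1) = w₁, and for every s ∈ [0,1]: ⟨w(s), n⟩ > 0 and f(s)·g'(s) − g(s)·f'(s) > 0. -/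
noncomputable section

/-- Two nonzero plane vectors `w₀, w₁` lying in the open half-plane
`⟨·, n⟩ > 0` with `det(w₀, w₁) > 0` can be joined by a smooth path of nonzero vectors
staying in that half-plane and rotating strictly counterclockwise
(`f g' − g f' > 0`). -/
theorem statement4 (n w₀ w₁ : ℝ × ℝ) (hn : n ≠ 0)
    (hw₀ : 0 < w₀.1 * n.1 + w₀.2 * n.2)
    (hw₁ : 0 < w₁.1 * n.1 + w₁.2 * n.2)
    (hdet : 0 < w₀.1 * w₁.2 - w₀.2 * w₁.1) :
    ∃ w : ℝ → ℝ × ℝ, ContDiff ℝ (⊤ : ℕ∞) w ∧ w 0 = w₀ ∧ w 1 = w₁ ∧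
      ∀ s ∈ Set.Icc (0 : ℝ) 1,
        w s ≠ (0, 0) ∧
        0 < (w s).1 * n.1 + (w s).2 * n.2 ∧
        0 < (w s).1 * deriv (fun u => (w u).2) s - (w s).2 * deriv (fun u => (w u).1) s := by
  refine ⟨fun s => ((1 - s) * w₀.1 + s * w₁.1, (1 - s) * w₀.2 + s * w₁.2), ?_, by simp, by simp,
    ?_⟩
  · apply ContDiff.prodMk <;> fun_prop
  · intro s hs
    obtain ⟨hs0, hs1⟩ := hs
    have hd1 : deriv (fun u : ℝ => (1 - u) * w₀.1 + u * w₁.1) s = w₁.1 - w₀.1 := by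
      have h1 : HasDerivAt (fun u : ℝ => (1 - u) * w₀.1 + u * w₁.1)
          ((-1) * w₀.1 + 1 * w₁.1) s :=
        (((hasDerivAt_id s).const_sub 1).mul_const w₀.1).add ((hasDerivAt_id s).mul_const w₁.1)
      rw [h1.deriv]; ring
    have hd2 : deriv (fun u : ℝ => (1 - u) * w₀.2 + u * w₁.2) s = w₁.2 - w₀.2 := by
      have h1 : HasDerivAt (fun u : ℝ => (1 - u) * w₀.2 + u * w₁.2)
          ((-1) * w₀.2 + 1 * w₁.2) s :=
        (((hasDerivAt_id s).const_sub 1).mul_const w₀.2).add ((hasDerivAt_id s).mul_const w₁.2)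
      rw [h1.deriv]; ring
    have hhalf : 0 < ((1 - s) * w₀.1 + s * w₁.1) * n.1 + ((1 - s) * w₀.2 + s * w₁.2) * n.2 := by
      rcases eq_or_lt_of_le hs1 with h | h
      · subst h; simpa using hw₁
      · nlinarith [mul_pos (by linarith : (0:ℝ) < 1 - s) hw₀, mul_nonneg hs0 hw₁.le]
    refine ⟨?_, hhalf, ?_⟩
    · intro h
      rw [Prod.mk.injEq] at h
      simp only [h.1, h.2, zero_mul, add_zero] at hhalf
      linarith
    · simp only [hd1, hd2]
      nlinarith
end
end
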